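/- Let T be a bounded linear operator on a complex Hilbert space H and N a self-adjoint norm on B(H) (N(T) = N(T*)). Then dw_N(T) ≥ (1/2) sqrt( (3/2) w_N(T)² + 2 N(|T|)⁴ + (d₁ + d₂) + 2|m₁ − m₂| ), with m₁ = max{N(Re T)² + N(|T|)⁴, w_N(T)²}, m₂ = max{N(Im T)², N(|T|)⁴}, d₁ = |N(Re T)² + N(|T|)⁴ − w_N(T)²|, d₂ = |N(Im T)² − N(|T|)⁴|. -/

import Mathlib

/-!
Write `A = N(Re T)`, `B = N(Im T)`, `C = N(|T|)`, `w = w_N(T)`, `D = dw_N(T)`.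
Since `Re(e^{iθ}T) = cos θ · Re T - sin θ · Im T` and `Re(e^{iθ}|T|) = cos θ · |T|`, the angles
`θ = 0` and `θ = π/2` give `A² + C⁴ ≤ D²` and `B² ≤ D²`, while `w ≤ D` and `w ≤ A + B`.
With `m₁ = max(A² + C⁴, w²)` and `m₂ = max(B², C⁴)`, the identity `|x - y| = 2 max(x, y) - x - y`
turns the radicand into `w²/2 - A² - B² + 4 max(m₁, m₂)`, which is at most `4D²` because
`w² ≤ (A + B)² ≤ 2(A² + B²)` and `m₁, m₂ ≤ D²`.
-/

open ContinuousLinearMap Complex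

variable {H : Type*} [NormedAddCommGroup H] [InnerProductSpace ℂ H] [CompleteSpace H]

/-- Real part of an operator: `Re(A) = (A + A*)/2`. -/
noncomputable def reOp (A : H →L[ℂ] H) : H →L[ℂ] H := (2 : ℂ)⁻¹ • (A + adjoint A)

/-- Imaginary part of an operator: `Im(A) = (A - A*)/(2i)`. -/
noncomputable def imOp (A : H →L[ℂ] H) : H →L[ℂ] H := (2 * I)⁻¹ • (A - adjoint A)

/-- Modulus of an operator: `|A| = (A* A)^{1/2}`. -/
noncomputable def absOp (A : H →L[ℂ] H) : H →L[ℂ] H := CFC.sqrt (adjoint A * A)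

/-- Generalized numerical radius. -/
noncomputable def wN (N : (H →L[ℂ] H) → ℝ) (T : H →L[ℂ] H) : ℝ :=
  ⨆ θ : ℝ, N (reOp (Complex.exp (θ * I) • T))

/-- Generalized Davis–Wielandt radius. -/
noncomputable def dwN (N : (H →L[ℂ] H) → ℝ) (T : H →L[ℂ] H) : ℝ :=
  ⨆ θ : ℝ, Real.sqrt ((N (reOp (Complex.exp (θ * I) • T))) ^ 2
    + (N (reOp (Complex.exp (θ * I) • absOp T))) ^ 4)

lemma isSelfAdjoint_absOp (T : H →L[ℂ] H) : IsSelfAdjoint (absOp T) :=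
  IsSelfAdjoint.of_nonneg (CFC.sqrt_nonneg _)

lemma adjoint_smul (z : ℂ) (T : H →L[ℂ] H) : adjoint (z • T) = starRingEnd ℂ z • adjoint T := by
  simp only [← star_eq_adjoint, star_smul]
  rfl

lemma reOp_smul (z : ℂ) (T : H →L[ℂ] H) :
    reOp (z • T) = (z.re : ℂ) • reOp T - (z.im : ℂ) • imOp T := by
  rw [reOp, reOp, imOp, adjoint_smul]
  match_scalars <;> apply Complex.ext <;> simp <;> ring

lemma reOp_smul_of_isSelfAdjoint (z : ℂ) {S : H →L[ℂ] H} (hS : IsSelfAdjoint S) :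
    reOp (z • S) = (z.re : ℂ) • S := by
  rw [reOp, adjoint_smul, hS.adjoint_eq, ← add_smul, smul_smul, add_conj]
  push_cast
  ring_nf

section Seminorm

variable (p : Seminorm ℂ (H →L[ℂ] H)) (T : H →L[ℂ] H)

lemma seminorm_reOp_exp_mul_I_smul_le (θ : ℝ) :
    p (reOp (exp (θ * I) • T)) ≤ p (reOp T) + p (imOp T) := by
  rw [reOp_smul, exp_ofReal_mul_I_re, exp_ofReal_mul_I_im]
  calc _ ≤ p ((Real.cos θ : ℂ) • reOp T) + p ((Real.sin θ : ℂ) • imOp T) := map_sub_le_add p _ _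
    _ = |Real.cos θ| * p (reOp T) + |Real.sin θ| * p (imOp T) := by
      simp only [map_smul_eq_mul, norm_real, Real.norm_eq_abs]
    _ ≤ _ := add_le_add (mul_le_of_le_one_left (apply_nonneg _ _) (Real.abs_cos_le_one θ))
      (mul_le_of_le_one_left (apply_nonneg _ _) (Real.abs_sin_le_one θ))

lemma seminorm_reOp_exp_mul_I_smul_absOp (θ : ℝ) :
    p (reOp (exp (θ * I) • absOp T)) = |Real.cos θ| * p (absOp T) := by
  rw [reOp_smul_of_isSelfAdjoint _ (isSelfAdjoint_absOp T), exp_ofReal_mul_I_re, map_smul_eq_mul,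
    norm_real, Real.norm_eq_abs]

lemma wN_nonneg : 0 ≤ wN p T :=
  Real.iSup_nonneg fun _ => apply_nonneg _ _

lemma wN_le_add : wN p T ≤ p (reOp T) + p (imOp T) :=
  ciSup_le (seminorm_reOp_exp_mul_I_smul_le p T)

lemma bddAbove_range_dwN : BddAbove (Set.range fun θ : ℝ =>
    Real.sqrt (p (reOp (exp (θ * I) • T)) ^ 2 + p (reOp (exp (θ * I) • absOp T)) ^ 4)) := by
  refine ⟨Real.sqrt ((p (reOp T) + p (imOp T)) ^ 2 + p (absOp T) ^ 4), ?_⟩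
  rintro _ ⟨θ, rfl⟩
  refine Real.sqrt_le_sqrt (add_le_add ?_ ?_)
  · exact pow_le_pow_left₀ (apply_nonneg _ _) (seminorm_reOp_exp_mul_I_smul_le p T θ) 2
  · rw [seminorm_reOp_exp_mul_I_smul_absOp]
    exact pow_le_pow_left₀ (by positivity)
      (mul_le_of_le_one_left (apply_nonneg _ _) (Real.abs_cos_le_one θ)) 4

lemma sqrt_le_dwN (θ : ℝ) :
    Real.sqrt (p (reOp (exp (θ * I) • T)) ^ 2 + p (reOp (exp (θ * I) • absOp T)) ^ 4)
      ≤ dwN p T :=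
  le_ciSup (bddAbove_range_dwN p T) θ

lemma sq_add_pow_four_le_dwN_sq (θ : ℝ) :
    p (reOp (exp (θ * I) • T)) ^ 2 + p (reOp (exp (θ * I) • absOp T)) ^ 4 ≤ dwN p T ^ 2 :=
  (Real.sqrt_le_iff.1 (sqrt_le_dwN p T θ)).2

lemma wN_le_dwN : wN p T ≤ dwN p T :=
  ciSup_le fun θ => le_trans
    ((Real.le_sqrt (apply_nonneg _ _) (by positivity)).2 (le_add_of_nonneg_right (by positivity)))
    (sqrt_le_dwN p T θ)

lemma reOp_sq_add_absOp_pow_four_le_dwN_sq : p (reOp T) ^ 2 + p (absOp T) ^ 4 ≤ dwN p T ^ 2 := by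
  have h := sq_add_pow_four_le_dwN_sq p T 0
  rw [seminorm_reOp_exp_mul_I_smul_absOp] at h
  simpa using h

lemma imOp_sq_le_dwN_sq : p (imOp T) ^ 2 ≤ dwN p T ^ 2 := by
  have h := sq_add_pow_four_le_dwN_sq p T (Real.pi / 2)
  rw [seminorm_reOp_exp_mul_I_smul_absOp, reOp_smul, exp_ofReal_mul_I_re,
    exp_ofReal_mul_I_im] at h
  simpa using h

end Seminorm

lemma abs_sub_eq_two_mul_max_sub_add (x y : ℝ) : |x - y| = 2 * max x y - (x + y) := by
  rw [← max_sub_min_eq_abs', ← min_add_max]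
  ring

lemma davisWielandt_bound_of_le {A B C w D : ℝ} (hw₀ : 0 ≤ w) (hwD : w ≤ D) (hwAB : w ≤ A + B)
    (hRe : A ^ 2 + C ^ 4 ≤ D ^ 2) (hIm : B ^ 2 ≤ D ^ 2) :
    D ≥ (1 / 2) * Real.sqrt ((3 / 2) * w ^ 2 + 2 * C ^ 4
      + (|A ^ 2 + C ^ 4 - w ^ 2| + |B ^ 2 - C ^ 4|)
      + 2 * |max (A ^ 2 + C ^ 4) (w ^ 2) - max (B ^ 2) (C ^ 4)|) := by
  have hD : 0 ≤ D := hw₀.trans hwD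
  have hw : w ^ 2 ≤ D ^ 2 := pow_le_pow_left₀ hw₀ hwD 2
  have hC : C ^ 4 ≤ D ^ 2 := by nlinarith [sq_nonneg A]
  have hwAB' : w ^ 2 ≤ 2 * (A ^ 2 + B ^ 2) := by nlinarith [sq_nonneg (A - B)]
  have hmax : max (max (A ^ 2 + C ^ 4) (w ^ 2)) (max (B ^ 2) (C ^ 4)) ≤ D ^ 2 :=
    max_le (max_le hRe hw) (max_le hIm hC)
  rw [ge_iff_le, ← le_div_iff₀' (by norm_num), Real.sqrt_le_iff]
  refine ⟨by positivity, ?_⟩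
  simp only [abs_sub_eq_two_mul_max_sub_add]
  linarith

theorem stmt_14_general (N : (H →L[ℂ] H) → ℝ) (T : H →L[ℂ] H)
    (hNadd : ∀ A B : H →L[ℂ] H, N (A + B) ≤ N A + N B)
    (hNsmul : ∀ (c : ℂ) (A : H →L[ℂ] H), N (c • A) = ‖c‖ * N A)
    (m₁ m₂ d₁ d₂ : ℝ)
    (hm₁ : m₁ = max ((N (reOp T)) ^ 2 + (N (absOp T)) ^ 4) ((wN N T) ^ 2))
    (hm₂ : m₂ = max ((N (imOp T)) ^ 2) ((N (absOp T)) ^ 4))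
    (hd₁ : d₁ = |(N (reOp T)) ^ 2 + (N (absOp T)) ^ 4 - (wN N T) ^ 2|)
    (hd₂ : d₂ = |(N (imOp T)) ^ 2 - (N (absOp T)) ^ 4|) :
    dwN N T ≥ (1 / 2) * Real.sqrt ((3 / 2) * (wN N T) ^ 2 + 2 * (N (absOp T)) ^ 4
      + (d₁ + d₂) + 2 * |m₁ - m₂|) := by
  let p : Seminorm ℂ (H →L[ℂ] H) := Seminorm.of N hNadd hNsmul
  subst hm₁ hm₂ hd₁ hd₂
  exact davisWielandt_bound_of_le (wN_nonneg p T) (wN_le_dwN p T) (wN_le_add p T)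
    (reOp_sq_add_absOp_pow_four_le_dwN_sq p T) (imOp_sq_le_dwN_sq p T)

theorem stmt_14 (N : (H →L[ℂ] H) → ℝ) (T : H →L[ℂ] H)
    (hN0 : ∀ A : H →L[ℂ] H, 0 ≤ N A)
    (hNeq : ∀ A : H →L[ℂ] H, N A = 0 → A = 0)
    (hNadd : ∀ A B : H →L[ℂ] H, N (A + B) ≤ N A + N B)
    (hNsmul : ∀ (c : ℂ) (A : H →L[ℂ] H), N (c • A) = ‖c‖ * N A)
    (hNsa : ∀ A : H →L[ℂ] H, N (adjoint A) = N A)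
    (m₁ m₂ d₁ d₂ : ℝ)
    (hm₁ : m₁ = max ((N (reOp T)) ^ 2 + (N (absOp T)) ^ 4) ((wN N T) ^ 2))
    (hm₂ : m₂ = max ((N (imOp T)) ^ 2) ((N (absOp T)) ^ 4))
    (hd₁ : d₁ = |(N (reOp T)) ^ 2 + (N (absOp T)) ^ 4 - (wN N T) ^ 2|)
    (hd₂ : d₂ = |(N (imOp T)) ^ 2 - (N (absOp T)) ^ 4|) :
    dwN N T ≥ (1 / 2) * Real.sqrt ((3 / 2) * (wN N T) ^ 2 + 2 * (N (absOp T)) ^ 4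
      + (d₁ + d₂) + 2 * |m₁ - m₂|) :=
  stmt_14_general N T hNadd hNsmul m₁ m₂ d₁ d₂ hm₁ hm₂ hd₁ hd₂
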